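/- Let X be a real m×n matrix, λ₁ ≥ 0, λ_F > 0, and let W be an n×n nonnegative matrix whose i-th row is zero. Let W* be the matrix obtained from W by filling row i with entries W*_{ij} := max{ (−λ₁/2 + Σ_u X̂_{uj}·X_{ui}) / (λ_F + Σ_u X_{ui}²), 0 } for j ≠ i and W*_{ii} := 0, where X̂ := X − X·W. Then the greedy step never increases the SLIM loss: l_SLIM(W*) ≤ l_SLIM(W). -/

import Mathlib

open Finset Matrix

/-- The SLIM loss: squared Frobenius norm of the residual `X - X * W`,
plus Frobenius (`λ_F`) and entrywise-L1 (`λ₁`) regularization of `W`. -/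
noncomputable def lSLIM {m n : ℕ} (X : Matrix (Fin m) (Fin n) ℝ) (l1 lF : ℝ)
    (W : Matrix (Fin n) (Fin n) ℝ) : ℝ :=
  (∑ u, ∑ j, (X u j - (X * W) u j) ^ 2) + lF * (∑ k, ∑ j, (W k j) ^ 2)
    + l1 * (∑ k, ∑ j, |W k j|)

/-- The greedy row for item `i`: entry `j ≠ i` is the clipped single-entry
minimizer `max{(-λ₁/2 + Σ_u X̂_{uj} X_{ui}) / (λ_F + Σ_u X_{ui}²), 0}` computed
from the residual `X̂ := X - X * W`, and entry `i` is zero. -/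
noncomputable def greedyRow {m n : ℕ} (X : Matrix (Fin m) (Fin n) ℝ)
    (l1 lF : ℝ) (W : Matrix (Fin n) (Fin n) ℝ) (i : Fin n) : Fin n → ℝ :=
  fun j =>
    if j = i then 0
    else
      max ((-l1 / 2 + ∑ u, (X - X * W) u j * X u i) /
            (lF + ∑ u, (X u i) ^ 2)) 0

/-! Since row `i` of `W` is zero, replacing it by `w` changes the residual by the rank-one matrix
`X_{·i} wᵀ`, and the SLIM loss separates over the columns `j`: it changes by
`Σ_j (a w_j² + (λ₁ - 2 c_j) w_j)` for `w ≥ 0`, where `a = λ_F + ‖X_{·i}‖²` and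
`c_j = ⟨X̂_{·j}, X_{·i}⟩`. The greedy entry is the clipped minimizer `max (-(λ₁ - 2 c_j) / (2a)) 0`
of the `j`-th summand, at which the summand is `≤ 0` (its value at `w_j = 0`). -/

theorem mul_sq_add_mul_max_nonpos {a : ℝ} (ha : 0 < a) (b : ℝ) :
    a * max (-b / (2 * a)) 0 ^ 2 + b * max (-b / (2 * a)) 0 ≤ 0 := by
  rcases le_total (-b / (2 * a)) 0 with h | h
  · simp [max_eq_right h]
  · have vertex : a * (-b / (2 * a)) ^ 2 + b * (-b / (2 * a)) = -(b ^ 2 / (4 * a)) := by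
      field_simp
      ring
    rw [max_eq_left h, vertex, neg_nonpos]
    positivity

namespace Matrix

variable {l m n α β : Type*} [Fintype m] [DecidableEq m]

theorem sum_apply_updateRow_add [AddCommMonoid β]
    (M : Matrix m n α) (i : m) (b : n → α) (g : (n → α) → β) :
    ∑ k, g (M.updateRow i b k) + g (M i) = ∑ k, g (M k) + g b := by
  rw [← Finset.add_sum_erase _ _ (Finset.mem_univ i), ← Finset.add_sum_erase _ _ (Finset.mem_univ i),
    Finset.sum_congr rfl fun k hk => by rw [updateRow_ne (Finset.ne_of_mem_erase hk)], updateRow_self]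
  ac_rfl

theorem mul_updateRow [Ring α] (A : Matrix l m α) (M : Matrix m n α) (i : m) (b : n → α) :
    A * M.updateRow i b = A * M + vecMulVec (Aᵀ i) (b - M i) := by
  ext u j
  simp only [mul_apply, add_apply, vecMulVec_apply, updateRow_apply, transpose_apply, Pi.sub_apply]
  rw [← Finset.add_sum_erase _ _ (Finset.mem_univ i), ← Finset.add_sum_erase _ _ (Finset.mem_univ i),
    Finset.sum_congr rfl fun k hk => by rw [if_neg (Finset.ne_of_mem_erase hk)], if_pos rfl]
  noncomm_ring

end Matrix

theorem sum_sum_sub_mul_sq {m n : Type*} [Fintype m] [Fintype n]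
    (R : Matrix m n ℝ) (x : m → ℝ) (w : n → ℝ) :
    ∑ u, ∑ j, (R u j - x u * w j) ^ 2 =
      ∑ u, ∑ j, R u j ^ 2 + ∑ j, ((∑ u, x u ^ 2) * w j ^ 2 - 2 * (∑ u, R u j * x u) * w j) := by
  simp only [Finset.sum_mul, Finset.mul_sum, ← Finset.sum_sub_distrib]
  rw [Finset.sum_comm (f := fun u j => R u j ^ 2), Finset.sum_comm, ← Finset.sum_add_distrib]
  refine Finset.sum_congr rfl fun j _ => ?_
  rw [← Finset.sum_add_distrib]
  refine Finset.sum_congr rfl fun u _ => ?_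
  ring

theorem lSLIM_updateRow_of_row_eq_zero {m n : ℕ} (X : Matrix (Fin m) (Fin n) ℝ) (l1 lF : ℝ)
    {W : Matrix (Fin n) (Fin n) ℝ} {i : Fin n} (hWrow : W i = 0) (w : Fin n → ℝ) :
    lSLIM X l1 lF (W.updateRow i w) = lSLIM X l1 lF W +
      ∑ j, ((lF + ∑ u, X u i ^ 2) * w j ^ 2 - 2 * (∑ u, (X - X * W) u j * X u i) * w j
        + l1 * |w j|) := by
  have residual : X - X * W.updateRow i w = (X - X * W) - vecMulVec (Xᵀ i) w := by
    rw [Matrix.mul_updateRow, hWrow, sub_zero, sub_add_eq_sub_sub]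
  have regularizer (f : ℝ → ℝ) (hf : f 0 = 0) :
      ∑ k, ∑ j, f (W.updateRow i w k j) = ∑ k, ∑ j, f (W k j) + ∑ j, f (w j) := by
    simpa [hWrow, hf] using Matrix.sum_apply_updateRow_add W i w fun r => ∑ j, f (r j)
  have frobenius := sum_sum_sub_mul_sq (X - X * W) (fun u => X u i) w
  simp only [lSLIM, ← Matrix.sub_apply X, residual, regularizer (· ^ 2) (zero_pow two_ne_zero),
    regularizer abs abs_zero]
  simp only [Matrix.sub_apply, vecMulVec_apply, transpose_apply] at frobenius ⊢
  rw [frobenius]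
  simp only [Finset.sum_add_distrib, Finset.sum_sub_distrib, ← Finset.mul_sum]
  ring

theorem greedyRow_le_self_general {m n : ℕ} (X : Matrix (Fin m) (Fin n) ℝ)
    (l1 lF : ℝ) (hlF : 0 < lF) (i : Fin n)
    (W : Matrix (Fin n) (Fin n) ℝ)
    (hWrow : ∀ j, W i j = 0) :
    lSLIM X l1 lF (W.updateRow i (greedyRow X l1 lF W i)) ≤ lSLIM X l1 lF W := by
  set a := lF + ∑ u, X u i ^ 2
  have ha : 0 < a := by positivity
  rw [lSLIM_updateRow_of_row_eq_zero X l1 lF (funext hWrow)]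
  refine add_le_of_nonpos_right (Finset.sum_nonpos fun j _ => ?_)
  by_cases hj : j = i
  · simp [greedyRow, hj]
  set c := ∑ u, (X - X * W) u j * X u i
  have greedy_entry : greedyRow X l1 lF W i j = max (-(l1 - 2 * c) / (2 * a)) 0 := by
    rw [greedyRow, if_neg hj]
    congr 1
    field_simp
    ring
  rw [greedy_entry, abs_of_nonneg (le_max_right _ _)]
  linarith [mul_sq_add_mul_max_nonpos ha (l1 - 2 * c)]

/-- The greedy step never increases the SLIM loss: filling the zero row `i`
of `W` with the clipped single-entry minimizers gives `l_SLIM(W*) ≤ l_SLIM(W)`. -/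
theorem greedyRow_le_self {m n : ℕ} (X : Matrix (Fin m) (Fin n) ℝ)
    (l1 lF : ℝ) (hl1 : 0 ≤ l1) (hlF : 0 < lF) (i : Fin n)
    (W : Matrix (Fin n) (Fin n) ℝ)
    (hW : ∀ k j, 0 ≤ W k j) (hWrow : ∀ j, W i j = 0) :
    lSLIM X l1 lF (W.updateRow i (greedyRow X l1 lF W i)) ≤ lSLIM X l1 lF W :=
  greedyRow_le_self_general X l1 lF hlF i W hWrow
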